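/- arXiv:2604.25354 — 2 statements merged into one kernel-verified Lean document; each statement's English description precedes it below -/
import Mathlib

section
/- Let δ = t + 1 with 1 ≤ t ≤ q^m − 2, and let M(X) ∈ E[X] be a monic squarefree polynomial of degree t such that: (i) M has t pairwise distinct nonzero roots x_1, …, x_t in E; (ii) X(X − 1)·M'(X) ≡ w (mod M(X)) in E[X] for some w lying in the image of F^* in E under the algebra map; and (iii) M(1) lies in the image of F^* in E. Then the narrow-sense primitive BCH code C_{(q, q^m−1, δ, 1)} has minimum distance exactly δ. -/
open Polynomial Finset

/-- The narrow-sense primitive BCH code `C_(q,n,δ,1)` of length `n` and designed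
distance `δ` with respect to the primitive element `β` of `E`: the `F`-linear
subspace of all `c` with `∑ i, c_i β^{i·j} = 0` for all `1 ≤ j ≤ δ - 1`. -/
def bchCode (F E : Type) [Field F] [Field E] [Algebra F E] (n δ : ℕ) (β : E) :
    Submodule F (Fin n → F) where
  carrier := {c | ∀ j : ℕ, 1 ≤ j → j ≤ δ - 1 →
    ∑ i : Fin n, algebraMap F E (c i) * β ^ ((i : ℕ) * j) = 0}
  add_mem' := by
    intro a b ha hb j h1 h2
    simp only [Pi.add_apply, map_add, add_mul]
    rw [Finset.sum_add_distrib, ha j h1 h2, hb j h1 h2, add_zero]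
  zero_mem' := by
    intro j h1 h2
    simp
  smul_mem' := by
    intro r a ha j h1 h2
    simp only [Pi.smul_apply, smul_eq_mul, map_mul, mul_assoc]
    rw [← Finset.mul_sum, ha j h1 h2, mul_zero]

/-- A (nonzero, linear) code `Γ ⊆ F^n` has minimum distance `d`:
there is a nonzero codeword of Hamming weight `d`, and every nonzero codeword
has Hamming weight at least `d`. -/
def hasMinDist {F : Type} [Field F] [DecidableEq F] {n : ℕ}
    (Γ : Submodule F (Fin n → F)) (d : ℕ) : Prop :=
  (∃ c ∈ Γ, c ≠ 0 ∧ hammingNorm c = d) ∧ ∀ c ∈ Γ, c ≠ 0 → d ≤ hammingNorm c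

lemma lagrange_power_sum_zero {E : Type} [Field E] {s : ℕ} (v : Fin s → E)
    (hv : Function.Injective v) {i : ℕ} (hi : i + 1 < s) :
    ∑ k : Fin s, v k ^ i * (∏ l ∈ Finset.univ.erase k, (v k - v l))⁻¹ = 0 := by
  classical
  have hinj : Set.InjOn v ↑(Finset.univ : Finset (Fin s)) := Function.Injective.injOn hv
  have hcard : #(Finset.univ : Finset (Fin s)) = s := by simp
  have hdeg : (X ^ i : E[X]).degree < #(Finset.univ : Finset (Fin s)) := by
    rw [hcard, degree_X_pow]
    exact_mod_cast Nat.lt_of_succ_lt hi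
  have hXi := Lagrange.eq_interpolate hinj hdeg
  have h1 : ((X : E[X]) ^ i).coeff (s - 1) = 0 := by
    rw [coeff_X_pow]
    have : ¬ (s - 1 = i) := by omega
    simp [this]
  have hb : ∀ k : Fin s, (Lagrange.basis Finset.univ v k).coeff (s - 1)
      = (∏ l ∈ Finset.univ.erase k, (v k - v l))⁻¹ := by
    intro k
    have hnd := Lagrange.natDegree_basis hinj (mem_univ k)
    have hlc : (Lagrange.basis Finset.univ v k).coeff (s - 1)
        = (Lagrange.basis Finset.univ v k).leadingCoeff := by
      rw [Polynomial.leadingCoeff, hnd, hcard]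
    rw [hlc, Lagrange.basis, Polynomial.leadingCoeff_prod, ← Finset.prod_inv_distrib]
    refine Finset.prod_congr rfl fun l hl => ?_
    have hne : (v k - v l) ≠ 0 := by
      rw [sub_ne_zero]
      exact fun h => (Finset.mem_erase.mp hl).1 (hv h).symm
    rw [Lagrange.basisDivisor, Polynomial.leadingCoeff_mul, leadingCoeff_C,
      (monic_X_sub_C (v l)).leadingCoeff, mul_one]
  have h2 := congrArg (fun P : E[X] => P.coeff (s - 1)) hXi
  rw [h1, Lagrange.interpolate_apply, finset_sum_coeff] at h2
  have h3 : ∑ b : Fin s, (C (eval (v b) ((X : E[X]) ^ i)) * Lagrange.basis Finset.univ v b).coeff (s - 1)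
      = ∑ k : Fin s, v k ^ i * (∏ l ∈ Finset.univ.erase k, (v k - v l))⁻¹ := by
    refine Finset.sum_congr rfl fun k _ => ?_
    rw [coeff_C_mul, hb k]
    simp
  rw [← h3, ← h2]

/-- Corollary: a sufficient condition for a primitive BCH code to
attain its designed distance `δ = t + 1`. Let `M ∈ E[X]` be monic, squarefree of
degree `t` with `t` pairwise distinct nonzero roots in `E`, suppose
`X(X-1)M'(X) ≡ w (mod M)` for some `w` in the image of `F^*`, and `M(1)` lies in the
image of `F^*`. Then `C_(q, q^m - 1, δ, 1)` has minimum distance exactly `δ`. -/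
theorem bch_minDist_of_locator_polynomial
    (q m t : ℕ) (hq : IsPrimePow q) (hm : 0 < m)
    (ht1 : 1 ≤ t) (ht2 : t ≤ q ^ m - 2)
    (F E : Type) [Field F] [Fintype F] [DecidableEq F] [Field E] [Fintype E] [Algebra F E]
    (hF : Fintype.card F = q) (hE : Fintype.card E = q ^ m)
    (β : E) (hβ : ∀ x : E, x ≠ 0 → ∃ k : ℕ, x = β ^ k)
    (M : Polynomial E) (hmonic : M.Monic) (hsq : Squarefree M) (hMdeg : M.natDegree = t)
    (x : Fin t → E) (hxinj : Function.Injective x) (hx0 : ∀ i, x i ≠ 0)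
    (hxr : ∀ i, M.eval (x i) = 0)
    (hcong : ∃ w : F, w ≠ 0 ∧
      M ∣ (X * (X - 1) * Polynomial.derivative M - C (algebraMap F E w)))
    (hM1 : ∃ u : F, u ≠ 0 ∧ M.eval 1 = algebraMap F E u) :
    hasMinDist (bchCode F E (q ^ m - 1) (t + 1) β) (t + 1) := by
  classical
  obtain ⟨w, hw0, hwdvd⟩ := hcong
  obtain ⟨u, hu0, hu⟩ := hM1
  set n := q ^ m - 1 with hn
  -- numerology
  have hQ3 : 3 ≤ q ^ m := by
    rcases Nat.lt_or_ge (q ^ m) 3 with h | h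
    · omega
    · exact h
  have hn0 : 0 < n := by omega
  have hnt : t + 1 ≤ n := by omega
  -- algebra map facts
  have halg : Function.Injective (algebraMap F E) := (algebraMap F E).injective
  set w' := algebraMap F E w with hw'
  set u' := algebraMap F E u with hu'def
  have hw'0 : w' ≠ 0 := fun h => hw0 (halg (by rw [← hw', h, map_zero]))
  have hu'0 : u' ≠ 0 := fun h => hu0 (halg (by rw [← hu'def, h, map_zero]))
  have hM1ne : M.eval 1 ≠ 0 := by rw [hu]; exact hu'0
  have hx1 : ∀ i, x i ≠ 1 := fun i h => hM1ne (by rw [← h]; exact hxr i)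
  -- beta facts
  have hβ0 : β ≠ 0 := by
    intro h
    obtain ⟨k, hk⟩ := hβ (x ⟨0, ht1⟩) (hx0 _)
    rcases k with _ | k
    · exact hx1 ⟨0, ht1⟩ (by simpa using hk)
    · exact hx0 ⟨0, ht1⟩ (by rw [hk, h, zero_pow (Nat.succ_ne_zero k)])
  set bu : Eˣ := Units.mk0 β hβ0 with hbu
  have hordu : orderOf bu = n := by
    have hall : ∀ g : Eˣ, g ∈ Subgroup.zpowers bu := by
      intro g
      obtain ⟨k, hk⟩ := hβ (g : E) g.ne_zero
      rw [Subgroup.mem_zpowers_iff]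
      exact ⟨(k : ℤ), by rw [zpow_natCast]; ext; rw [Units.val_pow_eq_pow_val]; exact hk.symm⟩
    rw [orderOf_eq_card_of_forall_mem_zpowers hall, Nat.card_eq_fintype_card, Fintype.card_units, hE]
  have hord : orderOf β = n := by
    have : β = (bu : E) := rfl
    rw [this, orderOf_units, hordu]
  have hβpow : ∀ i j : Fin n, β ^ (i : ℕ) = β ^ (j : ℕ) → i = j := by
    intro i j h
    have h' : bu ^ (i : ℕ) = bu ^ (j : ℕ) := by
      ext; rw [Units.val_pow_eq_pow_val, Units.val_pow_eq_pow_val]; exact h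
    have := pow_injOn_Iio_orderOf (x := bu)
      (by rw [hordu]; exact i.2) (by rw [hordu]; exact j.2) h'
    exact Fin.ext this
  have hexp : ∀ y : E, y ≠ 0 → ∃ i : Fin n, β ^ (i : ℕ) = y := by
    intro y hy
    obtain ⟨k, hk⟩ := hβ y hy
    refine ⟨⟨k % n, Nat.mod_lt _ hn0⟩, ?_⟩
    rw [hk]
    have := pow_mod_orderOf (x := β) (n := k)
    rw [hord] at this
    exact this
  -- M as nodal polynomial
  have hMeq : M = Lagrange.nodal Finset.univ x := by
    have hinjx : Set.InjOn x ↑(Finset.univ : Finset (Fin t)) := hxinj.injOn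
    have hcardt : #(Finset.univ : Finset (Fin t)) = t := by simp
    refine Polynomial.eq_of_degree_sub_lt_of_eval_index_eq Finset.univ hinjx ?_ ?_
    · rw [hcardt]
      refine lt_of_lt_of_le (Polynomial.degree_sub_lt ?_ hmonic.ne_zero ?_) ?_
      · rw [Lagrange.degree_nodal, hcardt, degree_eq_natDegree hmonic.ne_zero, hMdeg]
      · rw [hmonic.leadingCoeff, (Lagrange.nodal_monic).leadingCoeff]
      · rw [degree_eq_natDegree hmonic.ne_zero, hMdeg]
    · intro i _
      rw [hxr i, Lagrange.eval_nodal_at_node (mem_univ i)]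
  have hM' : ∀ k : Fin t, eval (x k) (derivative M) = ∏ l ∈ Finset.univ.erase k, (x k - x l) := by
    intro k
    rw [hMeq, Lagrange.eval_nodal_derivative_eval_node_eq (mem_univ k), Lagrange.eval_nodal]
  have hM1' : M.eval 1 = ∏ i : Fin t, (1 - x i) := by
    rw [hMeq, Lagrange.eval_nodal]
  -- the w-condition at the roots
  have hwk : ∀ k : Fin t, x k * ((x k - 1) * eval (x k) (derivative M)) = w' := by
    intro k
    obtain ⟨h, hh⟩ := hwdvd
    have h0 : eval (x k) (X * (X - 1) * derivative M - C w') = 0 := by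
      rw [hh, eval_mul, hxr k, zero_mul]
    rw [eval_sub, eval_mul, eval_mul, eval_sub, eval_X, eval_one, eval_C, sub_eq_zero] at h0
    rw [← h0]; ring
  -- the extended node vector
  set v : Fin (t + 1) → E := Fin.cons 1 x with hv
  have hvinj : Function.Injective v := by
    intro a b hab
    induction a using Fin.cases with
    | zero =>
      induction b using Fin.cases with
      | zero => rfl
      | succ j => exact absurd hab.symm (by simpa [hv] using hx1 j)
    | succ i =>
      induction b using Fin.cases with
      | zero => exact absurd hab (by simpa [hv] using hx1 i)
      | succ j => exact congrArg Fin.succ (hxinj (by simpa [hv] using hab))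
  -- erase products
  have herase0 : (Finset.univ : Finset (Fin (t+1))).erase 0
      = Finset.univ.map ⟨Fin.succ, Fin.succ_injective t⟩ := by
    rw [Fin.univ_succ, Finset.erase_cons]
  have hD0 : ∏ l ∈ (Finset.univ : Finset (Fin (t+1))).erase 0, (v 0 - v l) = u' := by
    rw [herase0, Finset.prod_map]
    rw [← hu, hM1']
    refine Finset.prod_congr rfl fun i _ => ?_
    simp [hv]
  have hDk : ∀ j : Fin t,
      x j * ∏ l ∈ (Finset.univ : Finset (Fin (t+1))).erase j.succ, (v j.succ - v l) = w' := by
    intro j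
    have hstep : (Finset.univ : Finset (Fin (t+1))).erase j.succ
        = Finset.cons 0 ((Finset.univ.map ⟨Fin.succ, Fin.succ_injective t⟩).erase j.succ)
          (by simp) := by
      rw [Fin.univ_succ, Finset.erase_cons_of_ne _ (Fin.succ_ne_zero j).symm]
    have hmap : ((Finset.univ : Finset (Fin t)).map
          ⟨Fin.succ, Fin.succ_injective t⟩).erase j.succ
        = (Finset.univ.erase j).map ⟨Fin.succ, Fin.succ_injective t⟩ := by
      rw [Finset.map_erase]
      rfl
    rw [hstep, Finset.prod_cons, hmap, Finset.prod_map]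
    have hterm : ∀ l : Fin t, v j.succ - v ((⟨Fin.succ, Fin.succ_injective t⟩ : Fin t ↪ Fin (t+1)) l)
        = x j - x l := by intro l; simp [hv]
    have : ∏ l ∈ Finset.univ.erase j, (v j.succ -
        v ((⟨Fin.succ, Fin.succ_injective t⟩ : Fin t ↪ Fin (t+1)) l))
        = ∏ l ∈ Finset.univ.erase j, (x j - x l) :=
      Finset.prod_congr rfl fun l _ => hterm l
    rw [this]
    have hv0 : v j.succ - v 0 = x j - 1 := by simp [hv]
    rw [hv0, ← hM' j, ← hwk j]
  -- key sum identity
  have hkey : ∀ jj : ℕ, 1 ≤ jj → jj ≤ t →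
      algebraMap F E u⁻¹ * β ^ (0 * jj)
        + ∑ k : Fin t, algebraMap F E w⁻¹ * x k ^ jj = 0 := by
    intro jj h1 h2
    have hKI := lagrange_power_sum_zero v hvinj (i := jj - 1) (by omega)
    rw [Fin.sum_univ_succ] at hKI
    have hv00 : v 0 = 1 := rfl
    have hterm0 : v 0 ^ (jj - 1) * (∏ l ∈ (Finset.univ : Finset (Fin (t+1))).erase 0,
        (v 0 - v l))⁻¹ = algebraMap F E u⁻¹ * β ^ (0 * jj) := by
      rw [hD0, hv00, one_pow, one_mul, map_inv₀, hu'def, Nat.zero_mul, pow_zero, mul_one]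
    have htermk : ∀ k : Fin t, v k.succ ^ (jj - 1)
        * (∏ l ∈ (Finset.univ : Finset (Fin (t+1))).erase k.succ, (v k.succ - v l))⁻¹
        = algebraMap F E w⁻¹ * x k ^ jj := by
      intro k
      have hvk : v k.succ = x k := by simp [hv]
      have hprod : ∏ l ∈ (Finset.univ : Finset (Fin (t+1))).erase k.succ, (v k.succ - v l)
          = w' * (x k)⁻¹ := by
        rw [← hDk k, mul_comm (x k), mul_assoc, mul_inv_cancel₀ (hx0 k), mul_one]
      rw [hprod, hvk, mul_inv, inv_inv, map_inv₀, ← hw']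
      have hxp : x k ^ (jj - 1) * x k = x k ^ jj := by
        rw [← pow_succ]
        congr 1
        omega
      calc x k ^ (jj - 1) * (w'⁻¹ * x k) = w'⁻¹ * (x k ^ (jj - 1) * x k) := by ring
        _ = w'⁻¹ * x k ^ jj := by rw [hxp]
    rw [hterm0] at hKI
    rw [← hKI]
    congr 1
    exact Finset.sum_congr rfl fun k _ => (htermk k).symm
  -- positions of the roots
  have hxe : ∀ k : Fin t, ∃ i : Fin n, β ^ (i : ℕ) = x k := fun k => hexp _ (hx0 k)
  choose p hp using hxe
  have hpinj : Function.Injective p := fun a b h => hxinj (by rw [← hp a, ← hp b, h])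
  set z0 : Fin n := ⟨0, hn0⟩ with hz0def
  have hp0 : ∀ k, p k ≠ z0 := by
    intro k h
    apply hx1 k
    rw [← hp k, h]
    simp [hz0def]
  -- the codeword
  set P : Finset (Fin n) := Finset.image p Finset.univ with hPdef
  have hz0P : z0 ∉ P := by
    simp only [hPdef, Finset.mem_image, not_exists]
    rintro k ⟨-, hk⟩
    exact hp0 k hk
  have hPcard : P.card = t := by
    rw [hPdef, Finset.card_image_of_injective _ hpinj, Finset.card_univ, Fintype.card_fin]
  set c : Fin n → F := fun i => if i = z0 then u⁻¹ else if i ∈ P then w⁻¹ else 0 with hc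
  have hcz0 : c z0 = u⁻¹ := by simp [hc]
  have hcP : ∀ i ∈ P, c i = w⁻¹ := by
    intro i hi
    have : i ≠ z0 := fun h => hz0P (h ▸ hi)
    simp [hc, this, hi]
  have hcoff : ∀ i : Fin n, i ∉ insert z0 P → c i = 0 := by
    intro i hi
    simp only [Finset.mem_insert, not_or] at hi
    simp [hc, hi.1, hi.2]
  have hcne : c ≠ 0 := by
    intro h
    have := congrFun h z0
    rw [hcz0] at this
    exact inv_ne_zero hu0 (by simpa using this)
  have hsupp : ({i | c i ≠ 0} : Finset (Fin n)) = insert z0 P := by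
    ext i
    simp only [Finset.mem_filter, Finset.mem_univ, true_and, Set.mem_setOf_eq,
      Finset.mem_insert]
    constructor
    · intro hne
      by_contra hcon
      push_neg at hcon
      exact hne (hcoff i (by simp [Finset.mem_insert, hcon.1, hcon.2]))
    · rintro (rfl | hi)
      · rw [hcz0]; exact inv_ne_zero hu0
      · rw [hcP i hi]; exact inv_ne_zero hw0
  have hnorm : hammingNorm c = t + 1 := by
    rw [hammingNorm, hsupp, Finset.card_insert_of_notMem hz0P, hPcard]
  -- membership in the BCH code
  have hmem : c ∈ bchCode F E n (t + 1) β := by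
    show ∀ j : ℕ, 1 ≤ j → j ≤ (t + 1) - 1 →
      ∑ i : Fin n, algebraMap F E (c i) * β ^ ((i : ℕ) * j) = 0
    intro jj h1 h2
    have h2' : jj ≤ t := by omega
    have hsum : ∑ i : Fin n, algebraMap F E (c i) * β ^ ((i : ℕ) * jj)
        = algebraMap F E u⁻¹ * β ^ (0 * jj)
          + ∑ k : Fin t, algebraMap F E w⁻¹ * x k ^ jj := by
      rw [← Finset.sum_subset (Finset.subset_univ (insert z0 P))
        (fun i _ hi => by rw [hcoff i hi, map_zero, zero_mul])]
      rw [Finset.sum_insert hz0P, hcz0]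
      have hB : ∑ i ∈ P, algebraMap F E (c i) * β ^ ((i : ℕ) * jj)
          = ∑ k : Fin t, algebraMap F E w⁻¹ * x k ^ jj := by
        rw [hPdef, Finset.sum_image (fun a _ b _ h => hpinj h)]
        refine Finset.sum_congr rfl fun k _ => ?_
        rw [hcP (p k) (by rw [hPdef]; exact Finset.mem_image_of_mem p (mem_univ k))]
        rw [pow_mul, hp k]
      rw [hB]
    rw [hsum]
    exact hkey jj h1 h2'
  constructor
  · exact ⟨c, hmem, hcne, hnorm⟩
  -- lower bound
  · intro d hd hd0
    by_contra hlt
    push_neg at hlt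
    set S : Finset (Fin n) := {i | d i ≠ 0} with hSdef
    have hScard : S.card ≤ t := by
      have : hammingNorm d = S.card := rfl
      omega
    have hSne : S.Nonempty := by
      rcases Finset.eq_empty_or_nonempty S with h | h
      · exfalso
        apply hd0
        funext i
        by_contra hi
        have : i ∈ S := by
          simp only [hSdef, Finset.mem_filter, Finset.mem_univ, true_and, Set.mem_setOf_eq]
          exact hi
        rw [h] at this
        exact absurd this (Finset.notMem_empty i)
      · exact h
    set s := S.card with hsdef
    have hs1 : 1 ≤ s := Finset.card_pos.mpr hSne
    let e : {a // a ∈ S} ≃ Fin s := S.equivFin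
    set σ : Fin s → Fin n := fun i => ((e.symm i : {a // a ∈ S}) : Fin n) with hσ
    have hσS : ∀ i, σ i ∈ S := fun i => (e.symm i).2
    have hσinj : Function.Injective σ := fun a b h => by
      have := Subtype.ext (p := fun a => a ∈ S) h
      exact e.symm.injective this
    set z : Fin s → E := fun i => β ^ ((σ i : Fin n) : ℕ) with hz
    have hzinj : Function.Injective z := fun a b h => hσinj (hβpow _ _ h)
    have hconstraint : ∀ i : Fin s,
        ∑ k : Fin s, (algebraMap F E (d (σ k)) * z k) * z k ^ (i : ℕ) = 0 := by
      intro i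
      have hcode := hd ((i : ℕ) + 1) (by omega) (by have := i.2; omega)
      calc ∑ k : Fin s, (algebraMap F E (d (σ k)) * z k) * z k ^ (i : ℕ)
          = ∑ k : Fin s, algebraMap F E (d (σ k)) * β ^ (((σ k : Fin n) : ℕ) * ((i : ℕ) + 1)) := by
            refine Finset.sum_congr rfl fun k _ => ?_
            have hzz : z k * z k ^ (i : ℕ) = β ^ (((σ k : Fin n) : ℕ) * ((i : ℕ) + 1)) := by
              rw [pow_mul]
              show z k * z k ^ (i : ℕ) = z k ^ ((i : ℕ) + 1)
              rw [pow_succ']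
            rw [mul_assoc, hzz]
        _ = ∑ a ∈ S.attach, algebraMap F E (d (a : Fin n))
              * β ^ (((a : Fin n) : ℕ) * ((i : ℕ) + 1)) := by
            rw [← Finset.univ_eq_attach]
            exact Equiv.sum_comp e.symm (fun a : {a // a ∈ S} => algebraMap F E (d (a : Fin n))
              * β ^ (((a : Fin n) : ℕ) * ((i : ℕ) + 1)))
        _ = ∑ j ∈ S, algebraMap F E (d j) * β ^ ((j : ℕ) * ((i : ℕ) + 1)) :=
            Finset.sum_attach S (fun j => algebraMap F E (d j) * β ^ ((j : ℕ) * ((i : ℕ) + 1)))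
        _ = ∑ j : Fin n, algebraMap F E (d j) * β ^ ((j : ℕ) * ((i : ℕ) + 1)) := by
            refine Finset.sum_subset (Finset.subset_univ S) ?_
            intro j _ hj
            have : d j = 0 := by
              by_contra hj'
              refine hj ?_
              simp only [hSdef, Finset.mem_filter, Finset.mem_univ, true_and, Set.mem_setOf_eq]
              exact hj'
            rw [this, map_zero, zero_mul]
        _ = 0 := hcode
    have hzero := Matrix.eq_zero_of_forall_pow_sum_mul_pow_eq_zero hzinj hconstraint
    obtain ⟨j0, hj0⟩ := hSne
    have hi0 := congrFun hzero (e ⟨j0, hj0⟩)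
    have hσi0 : σ (e ⟨j0, hj0⟩) = j0 := by
      rw [hσ]
      simp
    rw [hσi0] at hi0
    simp only [Pi.zero_apply, mul_eq_zero] at hi0
    rcases hi0 with h | h
    · have : d j0 = 0 := halg (by rw [h, map_zero])
      exact absurd this (by simpa [hSdef] using hj0)
    · exact pow_ne_zero _ hβ0 h
end

section
/- Let m ≥ 14 be a positive integer divisible by 14. Then the binary narrow-sense primitive BCH code C_{(2, 2^m−1, 15, 1)} has length 2^m − 1, dimension 2^m − 7m − 1 over F_2, and minimum distance exactly 15. -/
open Polynomial

/-!
Over `𝔽₂` every even syndrome `∑ cᵢ β^{2ij}` is the square of `∑ cᵢ β^{ij}`, so the code is the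
kernel of the seven odd syndromes `c ↦ ∑ cᵢ β^{i(2a+1)}`, `a < 7`, jointly a map `𝔽₂ⁿ → E⁷`. This
map is onto: a functional killing its image is `y ↦ ∑ₐ Tr(wₐ yₐ)`, and writing
`Tr(z) = ∑_{t<m} z^{2^t}` turns this into a vanishing Vandermonde system with nodes
`β^{(2a+1)2^t}`. The nodes are distinct because the cyclotomic cosets of `1, 3, …, 13` modulo
`2^m - 1` are distinct of full size `m`: a cyclic rotation of an odd `m`-bit number below
`2^{m/2}` by at most `m/2` places is even and still below `2^m - 1`. Hence the dimension is
`2^m - 1 - 7m`.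

The lower bound `15` is the BCH bound. A word of weight `15` is supported on the nonzero elements of
a `4`-dimensional `𝔽₂`-subspace `V ⊆ E`: each `j ≤ 14` has at most three binary digits, so `v ↦ v^j`
is a product of at most three `𝔽₂`-linear forms, and any such product sums to zero over `V`.
-/

open Finset

theorem eq_zero_of_forall_sum_pow_mul_eq_zero {ι K : Type*} [Field K] {s : Finset ι}
    {x : ι → K} (hx : Set.InjOn x s) {u : ι → K} (h : ∀ j < #s, ∑ i ∈ s, x i ^ j * u i = 0)
    {i : ι} (hi : i ∈ s) : u i = 0 := by
  classical
  set p := Lagrange.basis s x i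
  have hdeg : p.natDegree < #s := by
    rw [Lagrange.natDegree_basis hx hi]
    have := card_pos.mpr ⟨i, hi⟩
    omega
  calc u i = ∑ i' ∈ s, p.eval (x i') * u i' := by
        rw [sum_eq_single_of_mem i hi, Lagrange.eval_basis_self hx hi, one_mul]
        intro i' hi' hne
        rw [Lagrange.eval_basis_of_ne hne.symm hi', zero_mul]
    _ = ∑ j ∈ range #s, p.coeff j * ∑ i' ∈ s, x i' ^ j * u i' := by
        simp_rw [Polynomial.eval_eq_sum_range' hdeg, sum_mul, mul_sum, mul_assoc]
        exact sum_comm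
    _ = 0 := sum_eq_zero fun j hj => by rw [h j (mem_range.mp hj), mul_zero]

theorem isPrimitiveRoot_of_forall_eq_pow {E : Type*} [Field E] [Fintype E]
    (hE : 2 < Fintype.card E) {β : E} (hβ : ∀ x : E, x ≠ 0 → ∃ k : ℕ, x = β ^ k) :
    IsPrimitiveRoot β (Fintype.card E - 1) := by
  classical
  have hβ0 : β ≠ 0 := by
    rintro rfl
    obtain ⟨x, hx0, hx1⟩ : ∃ x : E, x ≠ 0 ∧ x ≠ 1 := by
      by_contra! h
      have hsub : (univ : Finset E) ⊆ {0, 1} := fun x _ => by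
        by_cases hx : x = 0 <;> simp [hx, h x]
      have := (card_le_card hsub).trans card_le_two
      rw [card_univ] at this
      omega
    obtain ⟨k, rfl⟩ := hβ x hx0
    rcases k with _ | k <;> simp_all
  let u := Units.mk0 β hβ0
  have hu : ∀ v : Eˣ, v ∈ Subgroup.zpowers u := fun v => by
    obtain ⟨k, hk⟩ := hβ v v.ne_zero
    exact ⟨k, Units.ext (by simp [u, hk])⟩
  have := IsPrimitiveRoot.orderOf (u : E)
  rwa [orderOf_units, orderOf_eq_card_of_forall_mem_zpowers hu, Nat.card_eq_fintype_card,
    Fintype.card_units] at this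

theorem sum_fin_pow_eq_sum_erase_zero {E M : Type*} [Field E] [Fintype E] [DecidableEq E]
    [AddCommMonoid M] {β : E} (hβ : IsPrimitiveRoot β (Fintype.card E - 1)) (f : E → M) :
    ∑ i : Fin (Fintype.card E - 1), f (β ^ (i : ℕ)) = ∑ x ∈ univ.erase 0, f x := by
  have : NeZero (Fintype.card E - 1) := ⟨by have := Fintype.one_lt_card (α := E); omega⟩
  refine sum_nbij (fun i => β ^ (i : ℕ)) (fun i _ => ?_) (fun i _ i' _ h => ?_)
    (fun x hx => ?_) fun _ _ => rfl
  · exact mem_erase.mpr ⟨pow_ne_zero _ (hβ.ne_zero (NeZero.ne _)), mem_univ _⟩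
  · exact Fin.ext (hβ.pow_inj i.isLt i'.isLt h)
  · obtain ⟨i, hi, rfl⟩ := hβ.eq_pow_of_pow_eq_one
      (FiniteField.pow_card_sub_one_eq_one x (ne_of_mem_erase hx))
    exact ⟨⟨i, hi⟩, mem_coe.mpr (mem_univ _), rfl⟩

section Syndrome

variable {F E : Type} [Field F] [Field E] [Algebra F E] {n : ℕ} {β : E}

variable (F n β) in
def syndrome (j : ℕ) : (Fin n → F) →ₗ[F] E :=
  Fintype.linearCombination F fun i : Fin n => β ^ ((i : ℕ) * j)

theorem syndrome_apply (j : ℕ) (c : Fin n → F) :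
    syndrome F n β j c = ∑ i, algebraMap F E (c i) * β ^ ((i : ℕ) * j) := by
  simp [syndrome, Fintype.linearCombination_apply, Algebra.smul_def]

theorem syndrome_single (j : ℕ) (i : Fin n) :
    syndrome F n β j (Pi.single i 1) = β ^ ((i : ℕ) * j) := by
  rw [syndrome, Fintype.linearCombination_apply_single, one_smul]

variable (F n β) in
def oddSyndromes (k : ℕ) : (Fin n → F) →ₗ[F] (Fin k → E) :=
  LinearMap.pi fun a : Fin k => syndrome F n β (2 * a + 1)

theorem mem_bchCode_iff {δ : ℕ} {c : Fin n → F} :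
    c ∈ bchCode F E n δ β ↔ ∀ j, 1 ≤ j → j ≤ δ - 1 → syndrome F n β j c = 0 := by
  simp only [syndrome_apply]
  rfl

theorem syndrome_card_mul [Fintype F] (j : ℕ) (c : Fin n → F) :
    syndrome F n β (Fintype.card F * j) c = syndrome F n β j c ^ Fintype.card F := by
  simp only [syndrome, Fintype.linearCombination_apply]
  rw [← FiniteField.frobeniusAlgHom_apply, map_sum]
  refine sum_congr rfl fun i _ => ?_
  rw [map_smul, FiniteField.frobeniusAlgHom_apply, ← pow_mul]
  ring_nf

theorem le_hammingNorm_of_mem_bchCode [DecidableEq F] {δ : ℕ} (hβ : IsPrimitiveRoot β n)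
    {c : Fin n → F} (hc : c ∈ bchCode F E n δ β) (hc0 : c ≠ 0) : δ ≤ hammingNorm c := by
  by_contra! hlt
  obtain ⟨i₀, hi₀ : c i₀ ≠ 0⟩ := Function.ne_iff.mp hc0
  have hn : n ≠ 0 := Fin.pos i₀ |>.ne'
  set s := ({i | c i ≠ 0} : Finset (Fin n))
  have hs : hammingNorm c = #s := rfl
  have hxinj : Set.InjOn (fun i : Fin n => β ^ (i : ℕ)) s :=
    fun i _ i' _ h => Fin.ext (hβ.pow_inj i.isLt i'.isLt h)
  have hvanish : ∀ j < #s, ∑ i ∈ s, (β ^ (i : ℕ)) ^ j * (algebraMap F E (c i) * β ^ (i : ℕ)) = 0 := by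
    intro j hj
    have := mem_bchCode_iff.mp hc (j + 1) (by omega) (by omega)
    rw [syndrome_apply] at this
    rw [← this, sum_filter_of_ne fun i _ h => ?_]
    · refine sum_congr rfl fun i _ => ?_
      ring
    · rintro hci
      simp [hci] at h
  have := eq_zero_of_forall_sum_pow_mul_eq_zero hxinj hvanish (i := i₀) (by simpa [s] using hi₀)
  simp [hi₀, hβ.ne_zero hn] at this

end Syndrome

section CyclotomicCosets

theorem two_pow_half_mul_self_le (m : ℕ) : 2 ^ (m / 2) * 2 ^ (m / 2) ≤ 2 ^ m := by
  rw [← pow_add]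
  exact Nat.pow_le_pow_right two_pos (by omega)

theorem not_mul_two_pow_modEq_of_odd {m s x y : ℕ} (hs : s ≠ 0) (hsm : s ≤ m / 2)
    (hx : x < 2 ^ (m / 2)) (hy : Odd y) (hym : y < 2 ^ m - 1) :
    ¬ x * 2 ^ s ≡ y [MOD 2 ^ m - 1] := by
  intro h
  have h2 : 2 ≤ 2 ^ (m / 2) := Nat.le_self_pow (by omega) 2
  have hs' : 2 ^ s ≤ 2 ^ (m / 2) := Nat.pow_le_pow_right two_pos hsm
  have hlt : x * 2 ^ s < 2 ^ m - 1 := by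
    have := two_pow_half_mul_self_le m
    have : x * 2 ^ s + 2 ≤ 2 ^ m := by nlinarith
    omega
  have heven : Even (x * 2 ^ s) := (Nat.even_pow.mpr ⟨even_two, hs⟩).mul_left x
  exact Nat.not_even_iff_odd.mpr hy (h.eq_of_lt_of_lt hlt hym ▸ heven)

theorem eq_of_odd_mul_two_pow_modEq {m k a b t s : ℕ} (hk : 2 * k ≤ 2 ^ (m / 2))
    (ha : a < k) (hb : b < k) (ht : t < m) (hs : s < m)
    (h : (2 * a + 1) * 2 ^ t ≡ (2 * b + 1) * 2 ^ s [MOD 2 ^ m - 1]) : a = b ∧ t = s := by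
  wlog hst : s ≤ t generalizing a b t s
  · exact (this hb ha hs ht h.symm (by omega)).imp Eq.symm Eq.symm
  obtain ⟨d, rfl⟩ := Nat.exists_eq_add_of_le hst
  have hcop : Nat.Coprime (2 ^ m - 1) (2 ^ s) :=
    Nat.Coprime.pow_right s <| Nat.coprime_two_right.mpr <|
      Nat.Even.sub_odd Nat.one_le_two_pow (Nat.even_pow.mpr ⟨even_two, by omega⟩) odd_one
  have hd : (2 * a + 1) * 2 ^ d ≡ 2 * b + 1 [MOD 2 ^ m - 1] :=
    Nat.ModEq.cancel_right_of_coprime hcop (by rwa [pow_add, mul_comm (2 ^ s), ← mul_assoc] at h)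
  have hodd : ∀ c < k, 2 * c + 1 < 2 ^ (m / 2) := fun c hc => by omega
  have hhalf : 2 ^ (m / 2) < 2 ^ m - 1 := by
    have := two_pow_half_mul_self_le m
    have : 2 * 2 ^ (m / 2) ≤ 2 ^ m := by nlinarith
    omega
  rcases Nat.eq_zero_or_pos d with rfl | hd0
  · rw [pow_zero, mul_one] at hd
    have := hd.eq_of_lt_of_lt ((hodd a ha).trans hhalf) ((hodd b hb).trans hhalf)
    omega
  exfalso
  rcases le_or_gt d (m / 2) with hdm | hdm
  · exact not_mul_two_pow_modEq_of_odd hd0.ne' hdm (hodd a ha) (odd_two_mul_add_one b)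
      ((hodd b hb).trans hhalf) hd
  · -- multiplying by `2 ^ (m - d)` rotates the other way, by at most `m / 2`
    have hrot : (2 * b + 1) * 2 ^ (m - d) ≡ 2 * a + 1 [MOD 2 ^ m - 1] :=
      calc (2 * b + 1) * 2 ^ (m - d) ≡ (2 * a + 1) * 2 ^ d * 2 ^ (m - d) [MOD 2 ^ m - 1] :=
            hd.symm.mul_right _
        _ = (2 * a + 1) * 2 ^ m := by rw [mul_assoc, ← pow_add, Nat.add_sub_cancel' (by omega)]
        _ ≡ (2 * a + 1) * 1 [MOD 2 ^ m - 1] := (Nat.modEq_sub Nat.one_le_two_pow).mul_left _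
        _ = 2 * a + 1 := mul_one _
    exact not_mul_two_pow_modEq_of_odd (by omega) (by omega) (hodd b hb) (odd_two_mul_add_one a)
      ((hodd a ha).trans hhalf) hrot

end CyclotomicCosets

section Dimension

variable {F E : Type} [Field F] [Fintype F] [Field E] [Algebra F E] {n : ℕ} {β : E}

theorem bchCode_eq_ker_oddSyndromes (hF : Fintype.card F = 2) (k : ℕ) :
    bchCode F E n (2 * k + 1) β = LinearMap.ker (oddSyndromes F n β k) := by
  ext c
  simp only [mem_bchCode_iff, LinearMap.mem_ker, oddSyndromes, funext_iff, LinearMap.pi_apply,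
    Pi.zero_apply]
  refine ⟨fun h a => h _ (by omega) (by omega), fun h j => ?_⟩
  induction j using Nat.strong_induction_on with
  | _ j ih =>
    intro hj1 hj2
    obtain ⟨i, rfl | rfl⟩ := Nat.even_or_odd' j
    · have hsq := syndrome_card_mul (β := β) i c
      rw [hF] at hsq
      rw [hsq, ih i (by omega) (by omega) (by omega), zero_pow two_ne_zero]
    · exact h ⟨i, by omega⟩

theorem exists_algebraMap_eq_sum_pow_of_dual [Finite E] (f : Module.Dual F E) :
    ∃ w : E, ∀ y, algebraMap F E (f y) =
      ∑ t ∈ range (Module.finrank F E), (w * y) ^ Fintype.card F ^ t := by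
  have := Module.Finite.of_finite (R := F) (M := E)
  set toDual := (Algebra.traceForm F E).toDual (traceForm_nondegenerate F E)
  refine ⟨toDual.symm f, fun y => ?_⟩
  conv_lhs => rw [← toDual.apply_symm_apply f, LinearMap.BilinForm.toDual_def]
  rw [Algebra.traceForm_apply, FiniteField.algebraMap_trace_eq_sum_pow, Nat.card_eq_fintype_card]

theorem exists_algebraMap_eq_sum_sum_pow_of_dual_pi [Finite E] {ι : Type*} [Fintype ι]
    [DecidableEq ι] (f : Module.Dual F (ι → E)) :
    ∃ w : ι → E, ∀ y, algebraMap F E (f y) =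
      ∑ a, ∑ t ∈ range (Module.finrank F E), (w a * y a) ^ Fintype.card F ^ t := by
  choose w hw using fun a =>
    exists_algebraMap_eq_sum_pow_of_dual (f ∘ₗ LinearMap.single F (fun _ => E) a)
  refine ⟨w, fun y => ?_⟩
  conv_lhs => rw [← univ_sum_single y, map_sum, map_sum]
  exact sum_congr rfl fun a _ => hw a (y a)

theorem finrank_eq_of_card_eq_two_pow [Fintype E] {m : ℕ} (hF : Fintype.card F = 2)
    (hE : Fintype.card E = 2 ^ m) : Module.finrank F E = m := by
  have h := Module.card_eq_pow_finrank (K := F) (V := E)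
  rw [hF, hE] at h
  exact (Nat.pow_right_injective le_rfl h).symm

theorem injOn_pow_odd_mul_two_pow {m k : ℕ} (hβ : IsPrimitiveRoot β (2 ^ m - 1))
    (hk : 2 * k ≤ 2 ^ (m / 2)) :
    Set.InjOn (fun p : ℕ × Fin k => β ^ ((2 * (p.2 : ℕ) + 1) * 2 ^ p.1))
      (range m ×ˢ univ : Finset (ℕ × Fin k)) := by
  rintro ⟨t, a⟩ hp ⟨t', a'⟩ hp' h
  simp only [coe_product, Set.mem_prod, coe_range, Set.mem_Iio] at hp hp'
  have hn : 2 ^ m - 1 ≠ 0 := Nat.sub_ne_zero_of_lt (Nat.one_lt_two_pow (by omega))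
  have h' := (hβ.isOfFinOrder hn).pow_eq_pow_iff_modEq.mp h
  rw [← hβ.eq_orderOf] at h'
  obtain ⟨ha, rfl⟩ := eq_of_odd_mul_two_pow_modEq hk a.isLt a'.isLt hp.1 hp'.1 h'
  rw [Fin.ext ha]

theorem oddSyndromes_surjective [Fintype E] {m k : ℕ} (hF : Fintype.card F = 2)
    (hE : Fintype.card E = 2 ^ m) (hβ : IsPrimitiveRoot β (2 ^ m - 1))
    (hk : 2 * k ≤ 2 ^ (m / 2)) : Function.Surjective (oddSyndromes F (2 ^ m - 1) β k) := by
  rw [← LinearMap.dualMap_injective_iff, injective_iff_map_eq_zero]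
  intro f hf
  rcases Nat.eq_zero_or_pos k with rfl | hk0
  · exact Subsingleton.elim _ _
  have hm : 2 ≤ m := by
    by_contra! hm
    rw [show m / 2 = 0 by omega, pow_zero] at hk
    omega
  obtain ⟨w, hw⟩ := exists_algebraMap_eq_sum_sum_pow_of_dual_pi f
  simp only [finrank_eq_of_card_eq_two_pow hF hE, hF] at hw
  have hvanish : ∀ l, ∑ p ∈ range m ×ˢ (univ : Finset (Fin k)),
      (β ^ ((2 * (p.2 : ℕ) + 1) * 2 ^ p.1)) ^ l * w p.2 ^ 2 ^ p.1 = 0 := by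
    intro l
    have hn : 0 < 2 ^ m - 1 := Nat.sub_pos_of_lt (Nat.one_lt_two_pow (by omega))
    have h0 := congrArg (algebraMap F E) (LinearMap.congr_fun hf (Pi.single ⟨l % _, Nat.mod_lt _ hn⟩ 1))
    simp only [LinearMap.dualMap_apply, LinearMap.zero_apply, hw, map_zero, oddSyndromes,
      LinearMap.pi_apply, syndrome_single, hβ.eq_orderOf, pow_mul, pow_mod_orderOf] at h0
    rw [← h0, sum_product, sum_comm]
    exact sum_congr rfl fun a _ => sum_congr rfl fun t _ => by ring
  refine LinearMap.ext fun y => (algebraMap F E).injective ?_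
  rw [hw, LinearMap.zero_apply, map_zero]
  refine sum_eq_zero fun a _ => sum_eq_zero fun t _ => ?_
  have hwa := eq_zero_of_forall_sum_pow_mul_eq_zero (injOn_pow_odd_mul_two_pow hβ hk)
    (fun j _ => hvanish j) (i := (0, a)) (mem_product.mpr ⟨mem_range.mpr (by omega), mem_univ a⟩)
  simp only [pow_zero, pow_one] at hwa
  simp [hwa]

theorem finrank_bchCode {F E : Type} [Field F] [Fintype F] [Field E] [Fintype E] [Algebra F E]
    {β : E} {m k : ℕ} (hF : Fintype.card F = 2) (hE : Fintype.card E = 2 ^ m)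
    (hβ : IsPrimitiveRoot β (2 ^ m - 1)) (hk : 2 * k ≤ 2 ^ (m / 2)) :
    Module.finrank F (bchCode F E (2 ^ m - 1) (2 * k + 1) β) = 2 ^ m - 1 - k * m := by
  have hrank := LinearMap.finrank_range_add_finrank_ker (oddSyndromes F (2 ^ m - 1) β k)
  rw [LinearMap.range_eq_top.mpr (oddSyndromes_surjective hF hE hβ hk), finrank_top] at hrank
  simp only [Module.finrank_pi_fintype, Module.finrank_self, finrank_eq_of_card_eq_two_pow hF hE,
    sum_const, card_univ, Fintype.card_fin, smul_eq_mul, mul_one] at hrank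
  rw [bchCode_eq_ker_oddSyndromes hF]
  omega

end Dimension

section PowerSums

variable {F E : Type*} [Field F] [Fintype F] [CommRing E] [Algebra F E]
  {ι κ : Type*} [Fintype ι] [DecidableEq ι] [Fintype κ]

theorem sum_prod_comp_eq_zero_of_not_surjective {p : κ → ι} (hp : ¬ Function.Surjective p) :
    ∑ ε : ι → F, ∏ t, ε (p t) = 0 := by
  classical
  obtain ⟨i₀, hi₀⟩ := not_forall.mp hp
  calc ∑ ε : ι → F, ∏ t, ε (p t) = ∑ ε : ι → F, ∏ i, ε i ^ #{t | p t = i} := by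
        refine sum_congr rfl fun ε _ => ?_
        rw [← prod_fiberwise' univ p ε]
        exact prod_congr rfl fun i _ => prod_const _
    _ = ∏ i, ∑ x : F, x ^ #{t | p t = i} := (Fintype.prod_sum _).symm
    _ = 0 := by
        refine prod_eq_zero (mem_univ i₀) ?_
        have : ({t | p t = i₀} : Finset κ) = ∅ := filter_false_of_mem fun t _ => (hi₀ ⟨t, ·⟩)
        simp [this]

theorem sum_pow_sum_card_pow_eq_zero (hκ : Fintype.card κ < Fintype.card ι) (v : ι → E)
    (a : κ → ℕ) : ∑ ε : ι → F, (∑ i, ε i • v i) ^ ∑ t, Fintype.card F ^ a t = 0 := by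
  classical
  have hfrob : ∀ (y : E) l, y ^ Fintype.card F ^ l = (FiniteField.frobeniusAlgHom F E ^ l) y :=
    fun y l => by rw [AlgHom.coe_pow, FiniteField.coe_frobeniusAlgHom, pow_iterate]
  calc ∑ ε : ι → F, (∑ i, ε i • v i) ^ ∑ t, Fintype.card F ^ a t
      = ∑ ε : ι → F, ∏ t, ∑ i, ε i • v i ^ Fintype.card F ^ a t := by
        refine sum_congr rfl fun ε _ => ?_
        rw [← prod_pow_eq_pow_sum]
        simp only [hfrob, map_sum, map_smul]
    _ = ∑ ε : ι → F, ∑ p : κ → ι, ∏ t, ε (p t) • v (p t) ^ Fintype.card F ^ a t := by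
        simp only [Fintype.prod_sum]
    _ = ∑ p : κ → ι, (∑ ε : ι → F, ∏ t, ε (p t)) • ∏ t, v (p t) ^ Fintype.card F ^ a t := by
        rw [sum_comm]
        simp only [prod_smul, sum_smul]
    _ = 0 := sum_eq_zero fun p _ => by
        rw [sum_prod_comp_eq_zero_of_not_surjective fun h => ?_, zero_smul]
        exact (Fintype.card_le_of_surjective p h).not_gt hκ

end PowerSums

theorem sum_pow_eq_zero_of_lt_two_pow_sub_one {F E : Type*} [Field F] [Fintype F] [CommRing E]
    [Algebra F E] (hF : Fintype.card F = 2) {r j : ℕ} (hj : j < 2 ^ r - 1) (v : Fin r → E) :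
    ∑ ε : Fin r → F, (∑ i, ε i • v i) ^ j = 0 := by
  set s := j.bitIndices.toFinset
  have hsr : s ⊆ range r := fun t ht => by
    have := Nat.two_pow_le_of_mem_bitIndices (List.mem_toFinset.mp ht)
    by_contra! h
    have := Nat.pow_le_pow_right two_pos (mem_range.not.mp h |> not_lt.mp)
    omega
  have hcard : #s < r := by
    refine lt_of_le_of_ne ((card_le_card hsr).trans_eq (card_range r)) fun h => ?_
    have hs : s = range r := eq_of_subset_of_card_le hsr (by simp [h])
    have : ∑ t ∈ s, 2 ^ t = j := sum_toFinset_bitIndices_two_pow j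
    rw [hs, Nat.geomSum_eq le_rfl] at this
    omega
  have := sum_pow_sum_card_pow_eq_zero (F := F) (κ := s) (by simpa using hcard) v Subtype.val
  rwa [hF, sum_coe_sort s (2 ^ ·), sum_toFinset_bitIndices_two_pow] at this

theorem exists_mem_bchCode_hammingNorm_eq {F E : Type} [Field F] [Fintype F] [DecidableEq F]
    [Field E] [Fintype E] [Algebra F E] {β : E} {m r : ℕ} (hF : Fintype.card F = 2)
    (hE : Fintype.card E = 2 ^ m) (hβ : IsPrimitiveRoot β (2 ^ m - 1)) (hr : r ≤ m) :
    ∃ c ∈ bchCode F E (2 ^ m - 1) (2 ^ r - 1) β, hammingNorm c = 2 ^ r - 1 := by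
  classical
  rw [← hE] at hβ ⊢
  let b := Module.finBasisOfFinrankEq F E (finrank_eq_of_card_eq_two_pow hF hE)
  let g := Fintype.linearCombination F fun i : Fin r => b (Fin.castLE hr i)
  have hg : Function.Injective g := linearIndependent_iff_injective_fintypeLinearCombination.mp
    (b.linearIndependent.comp _ (Fin.castLE_injective hr))
  set S := univ.image g
  have hS0 : 0 ∈ S := mem_image.mpr ⟨0, mem_univ _, map_zero g⟩
  refine ⟨fun i => if β ^ (i : ℕ) ∈ S then 1 else 0, ?_, ?_⟩
  · refine mem_bchCode_iff.mpr fun j hj1 hj2 => ?_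
    calc syndrome F _ β j _ = ∑ x ∈ univ.erase 0, if x ∈ S then x ^ j else 0 := by
          rw [syndrome_apply, ← sum_fin_pow_eq_sum_erase_zero hβ]
          refine sum_congr rfl fun i _ => ?_
          split_ifs <;> simp [pow_mul]
      _ = ∑ x ∈ S, x ^ j := by
          rw [sum_erase _ (by simp; omega), sum_ite_mem, univ_inter]
      _ = ∑ ε : Fin r → F, (∑ i, ε i • b (Fin.castLE hr i)) ^ j :=
          sum_image fun ε _ ε' _ h => hg h
      _ = 0 := sum_pow_eq_zero_of_lt_two_pow_sub_one hF (by omega) _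
  · calc hammingNorm _ = ∑ x ∈ univ.erase 0, if x ∈ S then 1 else 0 := by
          rw [hammingNorm, card_filter, ← sum_fin_pow_eq_sum_erase_zero hβ]
          refine sum_congr rfl fun i _ => ?_
          split_ifs <;> simp_all
      _ = #(S.erase 0) := by
          rw [← card_filter]
          congr 1
          ext x
          simp [and_comm]
      _ = 2 ^ r - 1 := by
          rw [card_erase_of_mem hS0, card_image_of_injective _ hg, card_univ,
            Fintype.card_fun, hF, Fintype.card_fin]

theorem binary_bch_delta_fifteen_general
    (m : ℕ) (hm : 14 ≤ m)
    (F E : Type) [Field F] [Fintype F] [DecidableEq F] [Field E] [Fintype E] [Algebra F E]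
    (hF : Fintype.card F = 2) (hE : Fintype.card E = 2 ^ m)
    (β : E) (hβ : ∀ x : E, x ≠ 0 → ∃ k : ℕ, x = β ^ k) :
    Module.finrank F (bchCode F E (2 ^ m - 1) 15 β) = 2 ^ m - 7 * m - 1 ∧
    hasMinDist (bchCode F E (2 ^ m - 1) 15 β) 15 := by
  have hβ' : IsPrimitiveRoot β (2 ^ m - 1) := by
    have : 2 ^ 2 ≤ 2 ^ m := Nat.pow_le_pow_right two_pos (by omega)
    exact hE ▸ isPrimitiveRoot_of_forall_eq_pow (by omega) hβ
  have hk : 2 * 7 ≤ 2 ^ (m / 2) :=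
    (show 2 * 7 ≤ 2 ^ 7 by norm_num).trans (Nat.pow_le_pow_right two_pos (by omega))
  obtain ⟨c, hc, hwt⟩ := exists_mem_bchCode_hammingNorm_eq (r := 4) hF hE hβ' (by omega)
  refine ⟨?_, ⟨c, hc, fun h => ?_, hwt⟩, fun c hc hc0 => le_hammingNorm_of_mem_bchCode hβ' hc hc0⟩
  · rw [finrank_bchCode (k := 7) hF hE hβ' hk]
    omega
  · simp [h] at hwt

/-- binary BCH codes with designed distance 15. For `14 ∣ m` with
`m ≥ 14`, the binary narrow-sense primitive BCH code `C_(2, 2^m - 1, 15, 1)` has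
dimension `2^m - 7m - 1` over `F_2` and minimum distance exactly `15`. -/
theorem binary_bch_delta_fifteen
    (m : ℕ) (hm14 : 14 ∣ m) (hm : 14 ≤ m)
    (F E : Type) [Field F] [Fintype F] [DecidableEq F] [Field E] [Fintype E] [Algebra F E]
    (hF : Fintype.card F = 2) (hE : Fintype.card E = 2 ^ m)
    (β : E) (hβ : ∀ x : E, x ≠ 0 → ∃ k : ℕ, x = β ^ k) :
    Module.finrank F (bchCode F E (2 ^ m - 1) 15 β) = 2 ^ m - 7 * m - 1 ∧
    hasMinDist (bchCode F E (2 ^ m - 1) 15 β) 15 :=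
  binary_bch_delta_fifteen_general m hm F E hF hE β hβ
end
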